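/- Let N be a positive integer, μ > 0, and define F_N(Δθ) := (2/π)·( Si((Nπ/2)(Δθ + μ)) − Si((Nπ/2)(Δθ − μ)) ). Then for every Δθ with |Δθ| > μ, the out-of-band leakage satisfies |F_N(Δθ)| ≤ (8/(Nπ²))·( 1/(|Δθ| + μ) + 1/(|Δθ| − μ) ). (Rigorous version of the exterior branch of the paper's Proposition 1: outside the target angular region the unconstrained beamforming-gain profile vanishes up to an O(1/N) correction.) -/

import Mathlib

/-!
Writing `Si b - Si a = ∫_a^b sin t / t dt` and integrating by parts once,
`∫_a^b sin t / t = cos a / a - cos b / b - ∫_a^b cos t / t²`, so for `0 < a ≤ b` the difference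
is at most `1/a + 1/b + (1/a - 1/b) = 2/a` in absolute value. Outside the band, `Si` being odd
lets us assume `Δθ > μ`, and both arguments of `Si` are then at least `(Nπ/2)(|Δθ| - μ) > 0`.
-/

open Real MeasureTheory intervalIntegral

/-- Sine integral `Si(x) = ∫₀ˣ sin t / t dt`, with the integrand extended by `1` at `t = 0`. -/
noncomputable def Si (x : ℝ) : ℝ :=
  ∫ t in (0 : ℝ)..x, if t = 0 then 1 else Real.sin t / t

lemma Si_eq_integral_sinc (x : ℝ) : Si x = ∫ t in (0 : ℝ)..x, sinc t := rfl

lemma Si_sub_Si (a b : ℝ) : Si b - Si a = ∫ t in a..b, sinc t := by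
  simp only [Si_eq_integral_sinc]
  exact integral_interval_sub_left (continuous_sinc.intervalIntegrable _ _)
    (continuous_sinc.intervalIntegrable _ _)

lemma Si_neg (x : ℝ) : Si (-x) = -Si x := by
  simp only [Si_eq_integral_sinc]
  calc ∫ t in (0 : ℝ)..-x, sinc t = ∫ t in (0 : ℝ)..-x, sinc (-t) := by simp only [sinc_neg]
    _ = ∫ t in x..0, sinc t := by rw [integral_comp_neg, neg_neg, neg_zero]
    _ = -∫ t in (0 : ℝ)..x, sinc t := integral_symm _ _

lemma integral_sin_div_eq {a b : ℝ} (h0 : (0 : ℝ) ∉ Set.uIcc a b) :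
    ∫ t in a..b, sin t / t = cos a / a - cos b / b - ∫ t in a..b, cos t / t ^ 2 := by
  have hne : ∀ t ∈ Set.uIcc a b, t ≠ 0 := fun t ht h => h0 (h ▸ ht)
  have hinv : ∀ t ∈ Set.uIcc a b, HasDerivAt (fun t : ℝ => t⁻¹) (-(t ^ 2)⁻¹) t :=
    fun t ht => hasDerivAt_inv (hne t ht)
  have hcos : ∀ t ∈ Set.uIcc a b, HasDerivAt (fun t => -cos t) (sin t) t :=
    fun t _ => by simpa using (hasDerivAt_cos t).fun_neg
  have hint : IntervalIntegrable (fun t : ℝ => -(t ^ 2)⁻¹) volume a b :=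
    (ContinuousOn.neg <| continuousOn_id.pow 2 |>.inv₀ fun t ht => pow_ne_zero 2 (hne t ht))
      |>.intervalIntegrable
  have := integral_mul_deriv_eq_deriv_mul hinv hcos hint (continuous_sin.intervalIntegrable _ _)
  simp only [inv_mul_eq_div, neg_mul_neg] at this
  rw [this]
  ring

lemma abs_cos_div_le (x : ℝ) {y : ℝ} (hy : 0 ≤ y) : |cos x / y| ≤ y⁻¹ := by
  rw [abs_div, abs_of_nonneg hy, div_eq_mul_inv]
  exact mul_le_of_le_one_left (inv_nonneg.mpr hy) (abs_cos_le_one x)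

lemma abs_integral_cos_div_sq_le {a b : ℝ} (ha : 0 < a) (hab : a ≤ b) :
    |∫ t in a..b, cos t / t ^ 2| ≤ a⁻¹ - b⁻¹ := by
  have hpos : ∀ t ∈ Set.uIcc a b, 0 < t := fun t ht =>
    ha.trans_le (Set.uIcc_of_le hab ▸ ht).1
  have hderiv : ∀ t ∈ Set.uIcc a b, HasDerivAt (fun t : ℝ => -t⁻¹) (t ^ 2)⁻¹ t := fun t ht => by
    simpa using (hasDerivAt_inv (hpos t ht).ne').fun_neg
  have hint : IntervalIntegrable (fun t : ℝ => (t ^ 2)⁻¹) volume a b :=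
    (continuousOn_id.pow 2 |>.inv₀ fun t ht => pow_ne_zero 2 (hpos t ht).ne').intervalIntegrable
  calc |∫ t in a..b, cos t / t ^ 2| ≤ ∫ t in a..b, (t ^ 2)⁻¹ :=
        norm_integral_le_of_norm_le (f := fun t => cos t / t ^ 2) hab
          (ae_of_all _ fun t _ => abs_cos_div_le t (sq_nonneg t)) hint
    _ = a⁻¹ - b⁻¹ := by rw [integral_eq_sub_of_hasDerivAt hderiv hint]; ring

lemma abs_Si_sub_Si_le {a b : ℝ} (ha : 0 < a) (hab : a ≤ b) : |Si b - Si a| ≤ 2 / a := by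
  have h0 : (0 : ℝ) ∉ Set.uIcc a b := Set.notMem_uIcc_of_lt ha (ha.trans_le hab)
  have hsinc : ∫ t in a..b, sinc t = ∫ t in a..b, sin t / t :=
    integral_congr fun t ht => sinc_of_ne_zero (ne_of_mem_of_not_mem ht h0)
  rw [Si_sub_Si, hsinc, integral_sin_div_eq h0]
  have hca := abs_le.mp (abs_cos_div_le a ha.le)
  have hcb := abs_le.mp (abs_cos_div_le b (ha.le.trans hab))
  have hrem := abs_le.mp (abs_integral_cos_div_sq_le ha hab)
  rw [abs_le, div_eq_mul_inv]
  constructor <;> linarith [hca.1, hca.2, hcb.1, hcb.2, hrem.1, hrem.2]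

lemma abs_Si_sub_Si_abs (c μ x : ℝ) :
    |Si (c * (x + μ)) - Si (c * (x - μ))| = |Si (c * (|x| + μ)) - Si (c * (|x| - μ))| := by
  rcases abs_cases x with ⟨hx, _⟩ | ⟨hx, _⟩
  · rw [hx]
  · rw [hx, show c * (-x + μ) = -(c * (x - μ)) by ring, show c * (-x - μ) = -(c * (x + μ)) by ring,
      Si_neg, Si_neg]
    congr 1
    ring

theorem out_of_band_leakage_bound_general (N : ℕ) (μ : ℝ) (hμ : 0 < μ)
    (Δθ : ℝ) (h : μ < |Δθ|) :
    |(2 / Real.pi) * (Si (((N : ℝ) * Real.pi / 2) * (Δθ + μ))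
        - Si (((N : ℝ) * Real.pi / 2) * (Δθ - μ)))|
      ≤ (8 / ((N : ℝ) * Real.pi ^ 2)) * (1 / (|Δθ| + μ) + 1 / (|Δθ| - μ)) := by
  obtain rfl | hN := N.eq_zero_or_pos
  · simp
  set c := (N : ℝ) * π / 2 with hc
  have hc_pos : 0 < c := by positivity
  have hlow : 0 < c * (|Δθ| - μ) := mul_pos hc_pos (by linarith)
  have hSi := abs_Si_sub_Si_le (b := c * (|Δθ| + μ)) hlow (by gcongr; linarith)
  rw [abs_mul, abs_of_pos (by positivity : 0 < 2 / π), abs_Si_sub_Si_abs]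
  calc 2 / π * |Si (c * (|Δθ| + μ)) - Si (c * (|Δθ| - μ))|
      ≤ 2 / π * (2 / (c * (|Δθ| - μ))) := by gcongr
    _ = 8 / (N * π ^ 2) * (1 / (|Δθ| - μ)) := by rw [hc]; field_simp; norm_num
    _ ≤ 8 / (N * π ^ 2) * (1 / (|Δθ| + μ) + 1 / (|Δθ| - μ)) := by
      gcongr
      exact le_add_of_nonneg_left (by positivity)

/-- Rigorous version of the exterior branch of the paper's Proposition 1: outside the
target angular region `|Δθ| > μ`, the (normalized) unconstrained beamforming-gain
profile `F_N(Δθ) = (2/π)(Si((Nπ/2)(Δθ+μ)) - Si((Nπ/2)(Δθ-μ)))` vanishes up to an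
`O(1/N)` correction. -/
theorem out_of_band_leakage_bound (N : ℕ) (hN : 0 < N) (μ : ℝ) (hμ : 0 < μ)
    (Δθ : ℝ) (h : μ < |Δθ|) :
    |(2 / Real.pi) * (Si (((N : ℝ) * Real.pi / 2) * (Δθ + μ))
        - Si (((N : ℝ) * Real.pi / 2) * (Δθ - μ)))|
      ≤ (8 / ((N : ℝ) * Real.pi ^ 2)) * (1 / (|Δθ| + μ) + 1 / (|Δθ| - μ)) :=
  out_of_band_leakage_bound_general N μ hμ Δθ h
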